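/- arXiv:1710.08409 — 4 statements merged into one kernel-verified Lean document; each statement's English description precedes it below -/
import Mathlib

section
/- For every N ∈ ℕ and all u, v, z ∈ ℂ with u ≠ v, u ≠ z and v ≠ z, the Yang R-matrix satisfies the quantum Yang–Baxter equation R₁₂(u−v) · R₁₃(u−z) · R₂₃(v−z) = R₂₃(v−z) · R₁₃(u−z) · R₁₂(u−v) as linear operators on ℂ^N ⊗ ℂ^N ⊗ ℂ^N. -/
noncomputable section

open Matrix

/-- The permutation operator `P = Σ e_{ij} ⊗ e_{ji}` on `ℂ^N ⊗ ℂ^N`. -/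
def permP (N : ℕ) : Matrix (Fin N × Fin N) (Fin N × Fin N) ℂ :=
  fun x y => if x.1 = y.2 ∧ x.2 = y.1 then 1 else 0

/-- The Yang R-matrix `R(u) = I - u⁻¹ P`. -/
def yangR (N : ℕ) (u : ℂ) : Matrix (Fin N × Fin N) (Fin N × Fin N) ℂ :=
  1 - u⁻¹ • permP N

/-- A matrix on `ℂ^N ⊗ ℂ^N` acting on factors 1 and 2 of `ℂ^N ⊗ ℂ^N ⊗ ℂ^N`. -/
def emb12 {N : ℕ} (M : Matrix (Fin N × Fin N) (Fin N × Fin N) ℂ) :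
    Matrix (Fin N × Fin N × Fin N) (Fin N × Fin N × Fin N) ℂ :=
  fun x y => M (x.1, x.2.1) (y.1, y.2.1) * (if x.2.2 = y.2.2 then 1 else 0)

/-- A matrix on `ℂ^N ⊗ ℂ^N` acting on factors 1 and 3 of `ℂ^N ⊗ ℂ^N ⊗ ℂ^N`. -/
def emb13 {N : ℕ} (M : Matrix (Fin N × Fin N) (Fin N × Fin N) ℂ) :
    Matrix (Fin N × Fin N × Fin N) (Fin N × Fin N × Fin N) ℂ :=
  fun x y => M (x.1, x.2.2) (y.1, y.2.2) * (if x.2.1 = y.2.1 then 1 else 0)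

/-- A matrix on `ℂ^N ⊗ ℂ^N` acting on factors 2 and 3 of `ℂ^N ⊗ ℂ^N ⊗ ℂ^N`. -/
def emb23 {N : ℕ} (M : Matrix (Fin N × Fin N) (Fin N × Fin N) ℂ) :
    Matrix (Fin N × Fin N × Fin N) (Fin N × Fin N × Fin N) ℂ :=
  fun x y => M (x.2.1, x.2.2) (y.2.1, y.2.2) * (if x.1 = y.1 then 1 else 0)

/-! Write `R_{ij}(t) = 1 - t⁻¹ P_{ij}`, where `P₁₂, P₁₃, P₂₃` are the permutation matrices of the
three transpositions of the tensor factors. Expanding both sides, the constant, linear and cubic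
terms agree (the cubic ones by the braid relation `P₁₂P₁₃P₂₃ = P₂₃P₁₃P₁₂`), and every quadratic
product is one of the two 3-cycles. Comparing their coefficients leaves the partial-fraction
identity `1/((u-v)(u-z)) + 1/((u-z)(v-z)) = 1/((u-v)(v-z))`. -/

/-- The relations say that `p, q, r` multiply like the transpositions `(12), (13), (23)` of `S₃`:
each product of two distinct ones is one of two fixed elements, according to its cyclic order. -/
theorem yang_baxter_of_braid_relations {K A : Type*} [CommRing K] [Ring A] [Algebra K A]
    {p q r : A} (hpq : p * q = q * r) (hqr : q * r = r * p) (hqp : q * p = p * r)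
    (hpr : p * r = r * q) {a b c : K} (habc : a * b + b * c = a * c) :
    (1 - a • p) * (1 - b • q) * (1 - c • r) = (1 - c • r) * (1 - b • q) * (1 - a • p) := by
  have hbraid : p * q * r = r * q * p := by
    rw [hpq, hqr, mul_assoc r q p, hqp, mul_assoc]
  simp only [mul_sub, sub_mul, one_mul, mul_one, smul_mul_smul_comm, hbraid]
  rw [← hqr, ← hpq, ← hpr, ← hqp]
  linear_combination (norm := module) habc • (p * q - q * p)

section TripleSwaps

variable (α : Type*)

def swap12 : Equiv.Perm (α × α × α) where
  toFun x := (x.2.1, x.1, x.2.2)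
  invFun x := (x.2.1, x.1, x.2.2)

def swap13 : Equiv.Perm (α × α × α) where
  toFun x := (x.2.2, x.2.1, x.1)
  invFun x := (x.2.2, x.2.1, x.1)

def swap23 : Equiv.Perm (α × α × α) where
  toFun x := (x.1, x.2.2, x.2.1)
  invFun x := (x.1, x.2.2, x.2.1)

end TripleSwaps

theorem emb12_yangR (N : ℕ) (t : ℂ) :
    emb12 (yangR N t) = 1 - t⁻¹ • (swap12 (Fin N)).permMatrix ℂ := by
  ext ⟨a, b, c⟩ ⟨d, e, f⟩
  simp only [emb12, yangR, permP, swap12, one_apply, Matrix.sub_apply, Matrix.smul_apply,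
    PEquiv.toMatrix_apply, Equiv.toPEquiv_apply, Option.mem_def, Option.some.injEq,
    Equiv.coe_fn_mk, Prod.mk.injEq, smul_eq_mul]
  grind

theorem emb13_yangR (N : ℕ) (t : ℂ) :
    emb13 (yangR N t) = 1 - t⁻¹ • (swap13 (Fin N)).permMatrix ℂ := by
  ext ⟨a, b, c⟩ ⟨d, e, f⟩
  simp only [emb13, yangR, permP, swap13, one_apply, Matrix.sub_apply, Matrix.smul_apply,
    PEquiv.toMatrix_apply, Equiv.toPEquiv_apply, Option.mem_def, Option.some.injEq,
    Equiv.coe_fn_mk, Prod.mk.injEq, smul_eq_mul]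
  grind

theorem emb23_yangR (N : ℕ) (t : ℂ) :
    emb23 (yangR N t) = 1 - t⁻¹ • (swap23 (Fin N)).permMatrix ℂ := by
  ext ⟨a, b, c⟩ ⟨d, e, f⟩
  simp only [emb23, yangR, permP, swap23, one_apply, Matrix.sub_apply, Matrix.smul_apply,
    PEquiv.toMatrix_apply, Equiv.toPEquiv_apply, Option.mem_def, Option.some.injEq,
    Equiv.coe_fn_mk, Prod.mk.injEq, smul_eq_mul]
  grind

/-- the Yang R-matrix satisfies the quantum Yang–Baxter equation
`R₁₂(u−v) R₁₃(u−z) R₂₃(v−z) = R₂₃(v−z) R₁₃(u−z) R₁₂(u−v)` on `ℂ^N ⊗ ℂ^N ⊗ ℂ^N`. -/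
theorem yang_baxter_equation (N : ℕ) (u v z : ℂ)
    (huv : u ≠ v) (huz : u ≠ z) (hvz : v ≠ z) :
    emb12 (yangR N (u - v)) * emb13 (yangR N (u - z)) * emb23 (yangR N (v - z)) =
      emb23 (yangR N (v - z)) * emb13 (yangR N (u - z)) * emb12 (yangR N (u - v)) := by
  have hpartial : (u - v)⁻¹ * (u - z)⁻¹ + (u - z)⁻¹ * (v - z)⁻¹ = (u - v)⁻¹ * (v - z)⁻¹ := by
    field_simp [sub_ne_zero.mpr huv, sub_ne_zero.mpr huz, sub_ne_zero.mpr hvz]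
    ring
  rw [emb12_yangR, emb13_yangR, emb23_yangR]
  refine yang_baxter_of_braid_relations ?_ ?_ ?_ ?_ hpartial <;>
    simp only [← permMatrix_mul] <;> rfl
end
end

section
/- Let N = 2n, fix ρ ∈ ℂ, fix the orthogonal or symplectic signs θ (upper/lower sign below), set κ = (ρ±1)/2, and let F_{ij} = E_{ij} − θ_{ij} E_{j̄ ī} ∈ 𝔤𝔩_{2n}. Define 𝓛^±(u) ∈ Mat_{2n}(U(𝔤𝔩_{2n})) for u ≠ −κ by 𝓛^±(u)_{ij} = δ_{ij}·1 − (u+κ)⁻¹ ι(F_{ji}). Then 𝓛^± satisfies the symmetry relation (𝓛^±)^t(−u−ρ) = 𝓛^±(u) ± (𝓛^±(u) − 𝓛^±(−u−ρ))/(2u+ρ) for all u with 2u+ρ ≠ 0 and u, −u−ρ ≠ −κ, where the transposition t is applied entrywise to the matrix over U(𝔤𝔩_{2n}). -/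
noncomputable section

open Matrix

attribute [local instance 100] LieRing.ofAssociativeRing

/-- The Lie algebra `𝔤𝔩_{2n}` of `2n×2n` complex matrices (commutator bracket). -/
abbrev gl (n : ℕ) := Matrix (Fin (2 * n)) (Fin (2 * n)) ℂ

/-- The universal enveloping algebra `U(𝔤𝔩_{2n})`. -/
abbrev Ugl (n : ℕ) := UniversalEnvelopingAlgebra ℂ (gl n)

/-- The standard matrix units `E_{ij}` of `𝔤𝔩_{2n}`. -/
def Eu (n : ℕ) (i j : Fin (2 * n)) : gl n := Matrix.single i j 1

/-- `F_{ij} = E_{ij} − θ_{ij} E_{j̄ ī}` where `ī = 2n − i + 1` corresponds to `Fin.rev`. -/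
def Fel (n : ℕ) (θ : Fin (2 * n) → ℂ) (i j : Fin (2 * n)) : gl n :=
  Eu n i j - (θ i * θ j) • Eu n (Fin.rev j) (Fin.rev i)

/-- The boundary Lax matrix `𝓛^±(u)_{ij} = δ_{ij}·1 − (u+κ)⁻¹ ι(F_{ji})`. -/
def laxPM (n : ℕ) (θ : Fin (2 * n) → ℂ) (κ u : ℂ) :
    Matrix (Fin (2 * n)) (Fin (2 * n)) (Ugl n) :=
  fun i j => (if i = j then 1 else 0)
    - (u + κ)⁻¹ • (UniversalEnvelopingAlgebra.ι ℂ (Fel n θ j i))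

/-- The transposition `t` (`(e_{ij})^t = θ_{ij} e_{j̄ ī}`) applied entrywise to a
matrix over an algebra. -/
def transpA (n : ℕ) (θ : Fin (2 * n) → ℂ) {A : Type*} [Ring A] [Algebra ℂ A]
    (M : Matrix (Fin (2 * n)) (Fin (2 * n)) A) : Matrix (Fin (2 * n)) (Fin (2 * n)) A :=
  fun a b => (θ (Fin.rev b) * θ (Fin.rev a)) • M (Fin.rev b) (Fin.rev a)

/-! `𝓛^±(u) = 1 − (u+κ)⁻¹ Φ` with `Φ = (ι F_{ji})_{ij}`, and `t` fixes `1` and negates `Φ`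
because the `F_{ij}` span the orthogonal resp. symplectic subalgebra. So both sides are of the
form `1 + x Φ`. Writing `c = u + κ` and `d = −u − ρ + κ`, so that `c + d = ±1` and
`c − d = 2u + ρ`, the claim reduces to the scalar identity
`1/d = −1/c + (c + d)/(c − d) · (1/d − 1/c)`. -/

def IsClassicalSigns (n : ℕ) (θ : Fin (2 * n) → ℂ) : Prop :=
  (∀ i, θ i = 1) ∨ ∀ i : Fin (2 * n), θ i = if (i : ℕ) < n then -1 else 1

lemma symplectic_sign_rev {n : ℕ} {θ : Fin (2 * n) → ℂ}
    (hθ : ∀ i : Fin (2 * n), θ i = if (i : ℕ) < n then -1 else 1) (i : Fin (2 * n)) :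
    θ (Fin.rev i) = -θ i := by
  have hrev : (Fin.rev i : ℕ) < n ↔ ¬(i : ℕ) < n := by
    simp only [Fin.val_rev]
    omega
  rw [hθ, hθ]
  by_cases h : (i : ℕ) < n <;> simp only [hrev, h, not_true_eq_false, not_false_eq_true, if_true,
    if_false, neg_neg]

namespace IsClassicalSigns

variable {n : ℕ} {θ : Fin (2 * n) → ℂ}

lemma mul_self (hθ : IsClassicalSigns n θ) (i : Fin (2 * n)) : θ i * θ i = 1 := by
  rcases hθ with h | h
  · simp [h]
  · rw [h]
    split_ifs <;> norm_num

lemma rev_mul_rev (hθ : IsClassicalSigns n θ) (i j : Fin (2 * n)) :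
    θ (Fin.rev i) * θ (Fin.rev j) = θ i * θ j := by
  rcases hθ with h | h
  · simp [h]
  · rw [symplectic_sign_rev h, symplectic_sign_rev h, neg_mul_neg]

end IsClassicalSigns

section Transposition

variable {n : ℕ} {θ : Fin (2 * n) → ℂ} {A : Type*} [Ring A] [Algebra ℂ A]

lemma transpA_sub (M N : Matrix (Fin (2 * n)) (Fin (2 * n)) A) :
    transpA n θ (M - N) = transpA n θ M - transpA n θ N := by
  ext a b
  simp only [transpA, Matrix.sub_apply, smul_sub]

lemma transpA_smul (c : ℂ) (M : Matrix (Fin (2 * n)) (Fin (2 * n)) A) :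
    transpA n θ (c • M) = c • transpA n θ M := by
  ext a b
  simp only [transpA, Matrix.smul_apply, smul_comm c]

lemma transpA_one (hsq : ∀ i, θ i * θ i = 1) :
    transpA n θ (1 : Matrix (Fin (2 * n)) (Fin (2 * n)) A) = 1 := by
  ext a b
  by_cases h : a = b
  · subst h
    simp [transpA, hsq]
  · simp [transpA, h, Ne.symm h]

end Transposition

section Generators

variable {n : ℕ} {θ : Fin (2 * n) → ℂ}

def fMatrix (n : ℕ) (θ : Fin (2 * n) → ℂ) : Matrix (Fin (2 * n)) (Fin (2 * n)) (Ugl n) :=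
  fun i j => UniversalEnvelopingAlgebra.ι ℂ (Fel n θ j i)

lemma laxPM_eq_one_sub_smul_fMatrix (κ u : ℂ) :
    laxPM n θ κ u = 1 - (u + κ)⁻¹ • fMatrix n θ := by
  ext i j
  simp only [laxPM, fMatrix, Matrix.sub_apply, Matrix.smul_apply, Matrix.one_apply]

lemma smul_Fel_rev_rev (hsq : ∀ i, θ i * θ i = 1)
    (hrev : ∀ i j, θ (Fin.rev i) * θ (Fin.rev j) = θ i * θ j) (i j : Fin (2 * n)) :
    (θ i * θ j) • Fel n θ (Fin.rev j) (Fin.rev i) = -Fel n θ i j := by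
  have hθ : θ i * θ j * (θ (Fin.rev j) * θ (Fin.rev i)) = 1 := by
    rw [hrev]
    linear_combination (θ j * θ j) * hsq i + hsq j
  simp only [Fel, Fin.rev_rev, smul_sub, smul_smul, hθ, one_smul]
  abel

lemma transpA_fMatrix (hsq : ∀ i, θ i * θ i = 1)
    (hrev : ∀ i j, θ (Fin.rev i) * θ (Fin.rev j) = θ i * θ j) :
    transpA n θ (fMatrix n θ) = -fMatrix n θ := by
  ext a b
  simp only [transpA, fMatrix, Matrix.neg_apply, hrev, ← map_smul, smul_Fel_rev_rev hsq hrev,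
    map_neg]

end Generators

lemma inv_eq_neg_inv_add_div_sub {K : Type*} [Field K] {c d : K} (hc : c ≠ 0) (hd : d ≠ 0)
    (hcd : c ≠ d) : d⁻¹ = -c⁻¹ + (c + d) / (c - d) * (d⁻¹ - c⁻¹) := by
  have : c - d ≠ 0 := sub_ne_zero.mpr hcd
  field_simp
  ring

/-- with `κ = (ρ±1)/2`, the boundary Lax matrix satisfies the symmetry
relation `(𝓛^±)^t(−u−ρ) = 𝓛^±(u) ± (𝓛^±(u) − 𝓛^±(−u−ρ))/(2u+ρ)`.
The sign `ε = +1` corresponds to the orthogonal case, `ε = −1` to the symplectic case. -/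
theorem boundary_lax_symmetry (n : ℕ) (ρ : ℂ) (θ : Fin (2 * n) → ℂ) (ε : ℂ)
    (hcase : ((∀ i, θ i = 1) ∧ ε = 1) ∨
      ((∀ i : Fin (2 * n), θ i = if (i : ℕ) < n then -1 else 1) ∧ ε = -1))
    (u : ℂ) (h2u : 2 * u + ρ ≠ 0)
    (hu : u ≠ -((ρ + ε) / 2)) (hu' : -u - ρ ≠ -((ρ + ε) / 2)) :
    transpA n θ (laxPM n θ ((ρ + ε) / 2) (-u - ρ)) =
      laxPM n θ ((ρ + ε) / 2) u +
        (ε * (2 * u + ρ)⁻¹) •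
          (laxPM n θ ((ρ + ε) / 2) u - laxPM n θ ((ρ + ε) / 2) (-u - ρ)) := by
  have hθ : IsClassicalSigns n θ := hcase.imp And.left And.left
  set κ := (ρ + ε) / 2 with hκ
  have hc : u + κ ≠ 0 := fun h => hu (by linear_combination h)
  have hd : -u - ρ + κ ≠ 0 := fun h => hu' (by linear_combination h)
  have hsum : (u + κ) + (-u - ρ + κ) = ε := by rw [hκ]; ring
  have hdiff : (u + κ) - (-u - ρ + κ) = 2 * u + ρ := by ring
  have hscalar := inv_eq_neg_inv_add_div_sub hc hd (sub_ne_zero.mp (hdiff ▸ h2u))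
  rw [hsum, hdiff, div_eq_mul_inv] at hscalar
  rw [laxPM_eq_one_sub_smul_fMatrix, laxPM_eq_one_sub_smul_fMatrix, transpA_sub, transpA_smul,
    transpA_one hθ.mul_self, transpA_fMatrix hθ.mul_self hθ.rev_mul_rev]
  match_scalars
  · ring
  · linear_combination hscalar
end
end

section
/- Let n ≥ 1 and identify ℂ^{2n} ≅ ℂ² ⊗ ℂⁿ via e_{i+n(a−1)} ↦ x_a ⊗ e_i, where x_{ab} are the matrix units of End(ℂ²). Under this identification, for u ≠ 0 the Yang R-matrix 𝓡(u) on ℂ^{2n} ⊗ ℂ^{2n} equals (x₁₁⊗x₁₁ + x₂₂⊗x₂₂) ⊗ R(u) + (x₁₁⊗x₂₂ + x₂₂⊗x₁₁) ⊗ I − u⁻¹ (x₁₂⊗x₂₁ + x₂₁⊗x₁₂) ⊗ P, and its transpose 𝓡^t(u) in the first ℂ^{2n}-factor (with respect to the orthogonal or symplectic transposition on ℂ^{2n}) equals (x₁₁⊗x₁₁ + x₂₂⊗x₂₂) ⊗ I + (x₁₁⊗x₂₂ + x₂₂⊗x₁₁) ⊗ R^t(u) ∓ u⁻¹ (x₁₂⊗x₂₁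 + x₂₁⊗x₁₂) ⊗ Q, where on ℂⁿ ⊗ ℂⁿ: P is the permutation operator, R(u) = I − u⁻¹P, Q = Σ_{i,j} e_{ij} ⊗ e_{j̄ ī} with ī = n−i+1 is of orthogonal type in both cases, R^t(u) = I − u⁻¹Q, and the sign ∓ is − in the orthogonal and + in the symplectic case. -/
noncomputable section

open Matrix

/-- The orthogonal-type operator `Q = Σ e_{ij} ⊗ e_{j̄ ī}` on `ℂ^n ⊗ ℂ^n`
(`ī = n − i + 1` is `Fin.rev`). -/
def Qorth (n : ℕ) : Matrix (Fin n × Fin n) (Fin n × Fin n) ℂ :=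
  fun x y => if x.2 = Fin.rev x.1 ∧ y.2 = Fin.rev y.1 then 1 else 0

/-- `R^t(u) = I − u⁻¹Q` on `ℂ^n ⊗ ℂ^n`, of orthogonal type. -/
def yangRtOrth (n : ℕ) (u : ℂ) : Matrix (Fin n × Fin n) (Fin n × Fin n) ℂ :=
  1 - u⁻¹ • Qorth n

/-- The identification `ℂ² ⊗ ℂⁿ ≅ ℂ^{2n}`, `x_a ⊗ e_i ↦ e_{i+n(a−1)}`. -/
def idx (n : ℕ) (p : Fin 2 × Fin n) : Fin (2 * n) :=
  if p.1 = 0 then ⟨p.2, by have := p.2.isLt; omega⟩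
  else ⟨n + p.2, by have := p.2.isLt; omega⟩

/-- A matrix on `ℂ^{2n} ⊗ ℂ^{2n}` rewritten in the indices of
`(ℂ² ⊗ ℂⁿ) ⊗ (ℂ² ⊗ ℂⁿ)`. -/
def reidx (n : ℕ)
    (M : Matrix (Fin (2 * n) × Fin (2 * n)) (Fin (2 * n) × Fin (2 * n)) ℂ) :
    Matrix ((Fin 2 × Fin n) × (Fin 2 × Fin n)) ((Fin 2 × Fin n) × (Fin 2 × Fin n)) ℂ :=
  fun x y => M (idx n x.1, idx n x.2) (idx n y.1, idx n y.2)

/-- The block `(x_{pq} ⊗ x_{rs}) ⊗ M`, an operator on `(ℂ² ⊗ ℂⁿ) ⊗ (ℂ² ⊗ ℂⁿ)`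
(after reordering of the tensor factors). -/
def blk (n : ℕ) (p q r s : Fin 2) (M : Matrix (Fin n × Fin n) (Fin n × Fin n) ℂ) :
    Matrix ((Fin 2 × Fin n) × (Fin 2 × Fin n)) ((Fin 2 × Fin n) × (Fin 2 × Fin n)) ℂ :=
  fun x y => (if x.1.1 = p ∧ y.1.1 = q then 1 else 0)
    * (if x.2.1 = r ∧ y.2.1 = s then 1 else 0) * M (x.1.2, x.2.2) (y.1.2, y.2.2)

/-- The transpose of an operator on `ℂ^{2n} ⊗ ℂ^{2n}` in the first tensor factor,
with respect to the transposition `(e_{ij})^t = θ_{ij} e_{j̄ ī}`. -/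
def t1 (n : ℕ) (θ : Fin (2 * n) → ℂ)
    (M : Matrix (Fin (2 * n) × Fin (2 * n)) (Fin (2 * n) × Fin (2 * n)) ℂ) :
    Matrix (Fin (2 * n) × Fin (2 * n)) (Fin (2 * n) × Fin (2 * n)) ℂ :=
  fun x y => θ (Fin.rev y.1) * θ (Fin.rev x.1) * M (Fin.rev y.1, x.2) (Fin.rev x.1, y.2)


section Aux
variable {n : ℕ}

@[simp] lemma idx00 (i k : Fin n) : idx n (0, i) = idx n (0, k) ↔ i = k := by
  simp [idx, Fin.ext_iff]
@[simp] lemma idx11 (i k : Fin n) : idx n (1, i) = idx n (1, k) ↔ i = k := by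
  simp [idx, Fin.ext_iff]
@[simp] lemma idx01 (i k : Fin n) : ¬ idx n (0, i) = idx n (1, k) := by
  simp [idx, Fin.ext_iff]; omega
@[simp] lemma idx10 (i k : Fin n) : ¬ idx n (1, i) = idx n (0, k) := by
  simp [idx, Fin.ext_iff]; omega
@[simp] lemma rev_idx0 (i : Fin n) : Fin.rev (idx n (0, i)) = idx n (1, Fin.rev i) := by
  ext; simp [idx, Fin.val_rev]; omega
@[simp] lemma rev_idx1 (i : Fin n) : Fin.rev (idx n (1, i)) = idx n (0, Fin.rev i) := by
  ext; simp [idx, Fin.val_rev]; omega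
@[simp] lemma idx0_val (i : Fin n) : ((idx n (0, i) : Fin (2*n)) : ℕ) = i := by simp [idx]
@[simp] lemma idx1_val (i : Fin n) : ((idx n (1, i) : Fin (2*n)) : ℕ) = n + i := by simp [idx]

end Aux

set_option maxHeartbeats 2000000 in
/-- the six-vertex block decomposition of the Yang R-matrix `𝓡(u)` on
`ℂ^{2n} ⊗ ℂ^{2n}` and of its transpose `𝓡^t(u)` in the first factor, under the
identification `ℂ^{2n} ≅ ℂ² ⊗ ℂⁿ`.  Here `ε = +1` is the orthogonal case and
`ε = −1` the symplectic case, so that the sign `∓` is `−ε`. -/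
theorem R_block_decomposition (n : ℕ) (hn : 1 ≤ n) (θ : Fin (2 * n) → ℂ) (ε : ℂ)
    (hcase : ((∀ i, θ i = 1) ∧ ε = 1) ∨
      ((∀ i : Fin (2 * n), θ i = if (i : ℕ) < n then -1 else 1) ∧ ε = -1))
    (u : ℂ) (hu : u ≠ 0) :
    reidx n (yangR (2 * n) u) =
      blk n 0 0 0 0 (yangR n u) + blk n 1 1 1 1 (yangR n u)
        + blk n 0 0 1 1 1 + blk n 1 1 0 0 1
        - u⁻¹ • (blk n 0 1 1 0 (permP n) + blk n 1 0 0 1 (permP n)) ∧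
    reidx n (t1 n θ (yangR (2 * n) u)) =
      blk n 0 0 0 0 1 + blk n 1 1 1 1 1
        + blk n 0 0 1 1 (yangRtOrth n u) + blk n 1 1 0 0 (yangRtOrth n u)
        + (-ε * u⁻¹) • (blk n 0 1 1 0 (Qorth n) + blk n 1 0 0 1 (Qorth n)) := by
  constructor
  · funext x y
    obtain ⟨⟨a, i⟩, ⟨b, j⟩⟩ := x
    obtain ⟨⟨c, k⟩, ⟨d, l⟩⟩ := y
    fin_cases a <;> fin_cases b <;> fin_cases c <;> fin_cases d <;>
      simp [reidx, yangR, permP, blk, Matrix.sub_apply, Matrix.add_apply,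
        Matrix.smul_apply, Matrix.one_apply, Prod.ext_iff] <;>
      split_ifs <;> simp_all <;> ring
  · have h01 : ∀ i : Fin n, θ (idx n (0, i)) = ε ∧ θ (idx n (1, i)) = 1 := by
      intro i
      rcases hcase with ⟨hθ, hε⟩ | ⟨hθ, hε⟩ <;>
        simp [hθ, hε, i.isLt]
    funext x y
    obtain ⟨⟨a, i⟩, ⟨b, j⟩⟩ := x
    obtain ⟨⟨c, k⟩, ⟨d, l⟩⟩ := y
    have hε2 : ε * ε = 1 := by rcases hcase with ⟨_, hε⟩ | ⟨_, hε⟩ <;> simp [hε]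
    fin_cases a <;> fin_cases b <;> fin_cases c <;> fin_cases d <;>
      simp [reidx, t1, yangR, yangRtOrth, permP, Qorth, blk, Matrix.sub_apply,
        Matrix.add_apply, Matrix.smul_apply, Matrix.one_apply, Prod.ext_iff,
        (h01 _).1, (h01 _).2, eq_comm] <;>
      split_ifs <;> simp_all <;> ring
end
end

section
/- Let 𝒜 be a unital associative ℂ-algebra, fix ρ ∈ ℂ and a sign (upper = orthogonal, lower = symplectic), and suppose S(u) ∈ Mat_{2n}(𝒜), defined for u in a cofinite subset of ℂ, satisfies the reflection equation 𝓡₁₂(u−v) S₁(u) 𝓡^t₁₂(−u−v−ρ) S₂(v) = S₂(v) 𝓡^t₁₂(−u−v−ρ) S₁(u) 𝓡₁₂(u−v) on ℂ^{2n} ⊗ ℂ^{2n} for all admissible u, v. Write S(u) in n×n blocks [[A(u), B(u)], [C(u), D(u)]]. Then the block B satisfies: R₁₂(u−v) B₁(u) R^t₁₂(−u−v−ρ) B₂(v) = B₂(v) R^t₁₂(−u−v−ρ) B₁(u) R₁₂(u−v), where on ℂⁿ ⊗ ℂⁿ: R(u) = I − u⁻¹P, R^t(u) = I − u⁻¹Q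 and Q = Σ_{i,j} e_{ij} ⊗ e_{j̄ ī} (orthogonal type, ī = n−i+1). -/
/-! Take the block of both sides of the reflection equation on ℂ^{2n} ⊗ ℂ^{2n} with rows in
(lo, lo) and columns in (hi, hi). All factors are sparse: `R(u)` connects a pair only to itself
and its swap, `S₁` preserves the second index, `S₂` the first, and `R^t(w)` is diagonal except
between anti-diagonal pairs `(i, ī)`. Hence every nonzero path through the matrix products stays
in index sets on which the factors are exactly `R(u)`, `B₁`, `R^t(w)`, `B₂` on ℂⁿ ⊗ ℂⁿ: the
reversal `ī` swaps the two halves, and the signs `θ` on one half multiply to `1` in both cases. -/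

noncomputable section

open Matrix

/-- The operator `Q = Σ θ_{ij} e_{ij} ⊗ e_{ī j̄}`, `ī = N − i + 1` being `Fin.rev`. -/
def Qop (N : ℕ) (θ : Fin N → ℂ) : Matrix (Fin N × Fin N) (Fin N × Fin N) ℂ :=
  fun x y => if x.2 = Fin.rev x.1 ∧ y.2 = Fin.rev y.1 then θ x.1 * θ y.1 else 0

/-- The Yang R-matrix `R(u) = I − u⁻¹P` with entries mapped into an algebra `A`. -/
def yangRA (N : ℕ) (A : Type*) [Ring A] [Algebra ℂ A] (u : ℂ) :
    Matrix (Fin N × Fin N) (Fin N × Fin N) A :=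
  ((1 : Matrix _ _ ℂ) - u⁻¹ • permP N).map (algebraMap ℂ A)

/-- `R^t(u) = I − u⁻¹Q` with entries mapped into an algebra `A`. -/
def yangRtA (N : ℕ) (θ : Fin N → ℂ) (A : Type*) [Ring A] [Algebra ℂ A] (u : ℂ) :
    Matrix (Fin N × Fin N) (Fin N × Fin N) A :=
  ((1 : Matrix _ _ ℂ) - u⁻¹ • Qop N θ).map (algebraMap ℂ A)

/-- `X₁ = X ⊗ I`. -/
def op1 {N : ℕ} {A : Type*} [Ring A] (X : Matrix (Fin N) (Fin N) A) :
    Matrix (Fin N × Fin N) (Fin N × Fin N) A :=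
  fun x y => if x.2 = y.2 then X x.1 y.1 else 0

/-- `X₂ = I ⊗ X`. -/
def op2 {N : ℕ} {A : Type*} [Ring A] (X : Matrix (Fin N) (Fin N) A) :
    Matrix (Fin N × Fin N) (Fin N × Fin N) A :=
  fun x y => if x.1 = y.1 then X x.2 y.2 else 0

/-- Embedding `Fin n → Fin (2n)`, `i ↦ i`. -/
def lo (n : ℕ) (i : Fin n) : Fin (2 * n) := ⟨i.1, by have := i.2; omega⟩

/-- Embedding `Fin n → Fin (2n)`, `i ↦ n + i`. -/
def hi (n : ℕ) (i : Fin n) : Fin (2 * n) := ⟨n + i.1, by have := i.2; omega⟩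

/-- The upper-right block `B(u) = (s_{i,n+j}(u))_{1≤i,j≤n}`. -/
def blockB {n : ℕ} {A : Type*} (X : Matrix (Fin (2 * n)) (Fin (2 * n)) A) :
    Matrix (Fin n) (Fin n) A := fun i j => X (lo n i) (hi n j)

/-- The orthogonal-type signs on `ℂⁿ` (all equal to `1`). -/
def orthTheta (n : ℕ) : Fin n → ℂ := fun _ => 1

namespace Matrix

variable {R : Type*} [NonUnitalNonAssocSemiring R]
  {l m₁ m₂ m₃ n : Type*} [Fintype m₁] [Fintype m₂] [Fintype m₃]

theorem mul_mul_mul_apply (M₁ : Matrix l m₁ R) (M₂ : Matrix m₁ m₂ R) (M₃ : Matrix m₂ m₃ R)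
    (M₄ : Matrix m₃ n R) (x : l) (y : n) :
    (M₁ * M₂ * M₃ * M₄) x y =
      ∑ t : m₁ × (m₂ × m₃), M₁ x t.1 * M₂ t.1 t.2.1 * M₃ t.2.1 t.2.2 * M₄ t.2.2 y := by
  simp only [mul_apply, Finset.sum_mul, Fintype.sum_prod_type]
  rw [Finset.sum_comm_cycle]
  refine Finset.sum_congr rfl fun a _ => ?_
  rw [Finset.sum_comm]

theorem submatrix_mul_mul_mul_of_paths {l' m₁' m₂' m₃' n' : Type*}
    [Fintype m₁'] [Fintype m₂'] [Fintype m₃']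
    (M₁ : Matrix l m₁ R) (M₂ : Matrix m₁ m₂ R) (M₃ : Matrix m₂ m₃ R) (M₄ : Matrix m₃ n R)
    (f : l' → l) {e₁ : m₁' → m₁} {e₂ : m₂' → m₂} {e₃ : m₃' → m₃} (g : n' → n)
    (he₁ : Function.Injective e₁) (he₂ : Function.Injective e₂) (he₃ : Function.Injective e₃)
    (hpath : ∀ x y a b c, M₁ (f x) a ≠ 0 → M₂ a b ≠ 0 → M₃ b c ≠ 0 → M₄ c (g y) ≠ 0 →
      a ∈ Set.range e₁ ∧ b ∈ Set.range e₂ ∧ c ∈ Set.range e₃) :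
    (M₁ * M₂ * M₃ * M₄).submatrix f g =
      M₁.submatrix f e₁ * M₂.submatrix e₁ e₂ * M₃.submatrix e₂ e₃ * M₄.submatrix e₃ g := by
  ext x y
  rw [submatrix_apply, mul_mul_mul_apply, mul_mul_mul_apply]
  refine (Fintype.sum_of_injective (Prod.map e₁ (Prod.map e₂ e₃))
    (he₁.prodMap (he₂.prodMap he₃)) _ _ (fun t ht => ?_) fun _ => rfl).symm
  by_contra hne
  simp only [Set.range_prodMap, Set.mem_prod] at ht
  exact ht (hpath x y _ _ _ (left_ne_zero_of_mul (left_ne_zero_of_mul (left_ne_zero_of_mul hne)))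
    (right_ne_zero_of_mul (left_ne_zero_of_mul (left_ne_zero_of_mul hne)))
    (right_ne_zero_of_mul (left_ne_zero_of_mul hne)) (right_ne_zero_of_mul hne))

end Matrix

section Tensor

variable {A : Type*} [Ring A] {N n : ℕ}

theorem op1_apply_ne_zero {X : Matrix (Fin N) (Fin N) A} {p q : Fin N × Fin N}
    (h : op1 X p q ≠ 0) : p.2 = q.2 :=
  of_not_not fun hpq => h (if_neg hpq)

theorem op2_apply_ne_zero {X : Matrix (Fin N) (Fin N) A} {p q : Fin N × Fin N}
    (h : op2 X p q ≠ 0) : p.1 = q.1 :=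
  of_not_not fun hpq => h (if_neg hpq)

theorem op1_submatrix_prodMap {ι ι' κ : Fin n → Fin N} (hκ : Function.Injective κ)
    (X : Matrix (Fin N) (Fin N) A) :
    (op1 X).submatrix (Prod.map ι κ) (Prod.map ι' κ) = op1 (X.submatrix ι ι') := by
  ext p q
  simp [op1, hκ.eq_iff]

theorem op2_submatrix_prodMap {ι κ κ' : Fin n → Fin N} (hι : Function.Injective ι)
    (X : Matrix (Fin N) (Fin N) A) :
    (op2 X).submatrix (Prod.map ι κ) (Prod.map ι κ') = op2 (X.submatrix κ κ') := by
  ext p q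
  simp [op2, hι.eq_iff]

variable [Algebra ℂ A]

theorem yangRA_apply_ne_zero {u : ℂ} {p q : Fin N × Fin N} (h : yangRA N A u p q ≠ 0) :
    p = q ∨ p = q.swap := by
  contrapose! h
  have hP : ¬(p.1 = q.2 ∧ p.2 = q.1) := fun hpq => h.2 (Prod.ext hpq.1 hpq.2)
  simp [yangRA, permP, one_apply_ne h.1, hP]

theorem yangRtA_apply_ne_zero {θ : Fin N → ℂ} {w : ℂ} {p q : Fin N × Fin N}
    (h : yangRtA N θ A w p q ≠ 0) : p = q ∨ p.2 = Fin.rev p.1 ∧ q.2 = Fin.rev q.1 := by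
  contrapose! h
  have hQ : ¬(p.2 = Fin.rev p.1 ∧ q.2 = Fin.rev q.1) := fun hpq => h.2 hpq.1 hpq.2
  simp [yangRtA, Qop, one_apply_ne h.1, hQ]

theorem yangRA_submatrix_prodMap {ι : Fin n → Fin N} (hι : Function.Injective ι) (u : ℂ) :
    (yangRA N A u).submatrix (Prod.map ι ι) (Prod.map ι ι) = yangRA n A u := by
  ext p q
  simp [yangRA, permP, one_apply, hι.eq_iff, Prod.ext_iff]

theorem yangRtA_submatrix_prodMap {ι κ : Fin n → Fin N} (hι : Function.Injective ι)
    (hκ : Function.Injective κ) (hrev : ∀ i, Fin.rev (ι i) = κ (Fin.rev i))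
    {θ : Fin N → ℂ} {θ' : Fin n → ℂ} (hθ : ∀ i j, θ (ι i) * θ (ι j) = θ' i * θ' j) (w : ℂ) :
    (yangRtA N θ A w).submatrix (Prod.map ι κ) (Prod.map ι κ) = yangRtA n θ' A w := by
  ext p q
  simp [yangRtA, Qop, one_apply, hι.eq_iff, hκ.eq_iff, Prod.ext_iff, hrev, hθ]

end Tensor

section Blocks

theorem lo_injective (n : ℕ) : Function.Injective (lo n) := fun i j h => by
  simpa [lo, Fin.ext_iff] using h

theorem hi_injective (n : ℕ) : Function.Injective (hi n) := fun i j h => by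
  simpa [hi, Fin.ext_iff] using h

theorem rev_lo {n : ℕ} (i : Fin n) : Fin.rev (lo n i) = hi n (Fin.rev i) := by
  ext; simp only [lo, hi, Fin.val_rev]; omega

theorem rev_hi {n : ℕ} (i : Fin n) : Fin.rev (hi n i) = lo n (Fin.rev i) := by
  ext; simp only [lo, hi, Fin.val_rev]; omega

theorem range_lo (n : ℕ) : Set.range (lo n) = {i : Fin (2 * n) | (i : ℕ) < n} := by
  ext i
  exact ⟨by rintro ⟨j, rfl⟩; exact j.2, fun h => ⟨⟨i, h⟩, rfl⟩⟩

theorem range_hi (n : ℕ) : Set.range (hi n) = {i : Fin (2 * n) | n ≤ (i : ℕ)} := by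
  ext i
  refine ⟨by rintro ⟨j, rfl⟩; exact Nat.le_add_right n j, fun (h : n ≤ (i : ℕ)) => ?_⟩
  exact ⟨⟨i - n, by have := i.2; omega⟩, by ext; simp only [hi]; omega⟩

variable {A : Type*} [Ring A] [Algebra ℂ A] {n : ℕ}

theorem reflection_lhs_submatrix {θ : Fin (2 * n) → ℂ} (hθ : ∀ i, θ (hi n i) = 1) (u w : ℂ)
    (S T : Matrix (Fin (2 * n)) (Fin (2 * n)) A) :
    (yangRA (2 * n) A u * op1 S * yangRtA (2 * n) θ A w * op2 T).submatrix
        (Prod.map (lo n) (lo n)) (Prod.map (hi n) (hi n)) =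
      yangRA n A u * op1 (blockB S) * yangRtA n (orthTheta n) A w * op2 (blockB T) := by
  have hll := (lo_injective n).prodMap (lo_injective n)
  have hhl := (hi_injective n).prodMap (lo_injective n)
  -- nonzero paths run (lo, lo) → (hi, lo) → (hi, lo) → (hi, hi)
  rw [submatrix_mul_mul_mul_of_paths _ _ _ _ _ _ hll hhl hhl ?paths,
    yangRA_submatrix_prodMap (lo_injective n), op1_submatrix_prodMap (lo_injective n),
    yangRtA_submatrix_prodMap (hi_injective n) (lo_injective n) rev_hi
      (θ' := orthTheta n) (fun i j => by simp [hθ, orthTheta]),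
    op2_submatrix_prodMap (hi_injective n)]
  · rfl
  intro x y a b c h₁ h₂ h₃ h₄
  have hxa := yangRA_apply_ne_zero h₁
  have hab := op1_apply_ne_zero h₂
  have hbc := yangRtA_apply_ne_zero h₃
  have hcy := op2_apply_ne_zero h₄
  simp only [Set.range_prodMap, range_lo, range_hi, Set.mem_prod, Set.mem_ofPred_eq]
  simp only [Prod.ext_iff, Prod.map_fst, Prod.map_snd, Prod.fst_swap, Prod.snd_swap,
    Fin.ext_iff, Fin.val_rev, lo, hi] at hxa hab hbc hcy ⊢
  omega

theorem reflection_rhs_submatrix {θ : Fin (2 * n) → ℂ}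
    (hθ : ∀ i j, θ (lo n i) * θ (lo n j) = 1) (u w : ℂ)
    (S T : Matrix (Fin (2 * n)) (Fin (2 * n)) A) :
    (op2 T * yangRtA (2 * n) θ A w * op1 S * yangRA (2 * n) A u).submatrix
        (Prod.map (lo n) (lo n)) (Prod.map (hi n) (hi n)) =
      op2 (blockB T) * yangRtA n (orthTheta n) A w * op1 (blockB S) * yangRA n A u := by
  have hlh := (lo_injective n).prodMap (hi_injective n)
  have hhh := (hi_injective n).prodMap (hi_injective n)
  -- nonzero paths run (lo, lo) → (lo, hi) → (lo, hi) → (hi, hi)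
  rw [submatrix_mul_mul_mul_of_paths _ _ _ _ _ _ hlh hlh hhh ?paths,
    op2_submatrix_prodMap (lo_injective n),
    yangRtA_submatrix_prodMap (lo_injective n) (hi_injective n) rev_lo
      (θ' := orthTheta n) (fun i j => by simp [hθ, orthTheta]),
    op1_submatrix_prodMap (hi_injective n), yangRA_submatrix_prodMap (hi_injective n)]
  · rfl
  intro x y a b c h₁ h₂ h₃ h₄
  have hxa := op2_apply_ne_zero h₁
  have hab := yangRtA_apply_ne_zero h₂
  have hbc := op1_apply_ne_zero h₃
  have hcy := yangRA_apply_ne_zero h₄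
  simp only [Set.range_prodMap, range_lo, range_hi, Set.mem_prod, Set.mem_ofPred_eq]
  simp only [Prod.ext_iff, Prod.map_fst, Prod.map_snd, Prod.fst_swap, Prod.snd_swap,
    Fin.ext_iff, Fin.val_rev, lo, hi] at hxa hab hbc hcy ⊢
  omega

end Blocks

theorem block_BB_relation_general (n : ℕ) (ρ : ℂ) (θ : Fin (2 * n) → ℂ)
    (hcase : (∀ i, θ i = 1) ∨
      (∀ i : Fin (2 * n), θ i = if (i : ℕ) < n then -1 else 1))
    (A : Type*) [Ring A] [Algebra ℂ A]
    (S : ℂ → Matrix (Fin (2 * n)) (Fin (2 * n)) A)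
    (D : Set ℂ)
    (hRE : ∀ u ∈ D, ∀ v ∈ D, u ≠ v → u + v + ρ ≠ 0 →
      yangRA (2 * n) A (u - v) * op1 (S u) * yangRtA (2 * n) θ A (-u - v - ρ) * op2 (S v) =
        op2 (S v) * yangRtA (2 * n) θ A (-u - v - ρ) * op1 (S u)
          * yangRA (2 * n) A (u - v)) :
    ∀ u ∈ D, ∀ v ∈ D, u ≠ v → u + v + ρ ≠ 0 →
      yangRA n A (u - v) * op1 (blockB (S u)) * yangRtA n (orthTheta n) A (-u - v - ρ)
          * op2 (blockB (S v)) =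
        op2 (blockB (S v)) * yangRtA n (orthTheta n) A (-u - v - ρ)
          * op1 (blockB (S u)) * yangRA n A (u - v) := by
  have hθhi : ∀ i, θ (hi n i) = 1 := by
    rcases hcase with h | h <;> simp [h, hi]
  have hθlo : ∀ i j, θ (lo n i) * θ (lo n j) = 1 := by
    rcases hcase with h | h <;> simp [h, lo]
  intro u hu v hv huv huvρ
  rw [← reflection_lhs_submatrix hθhi, ← reflection_rhs_submatrix hθlo, hRE u hu v hv huv huvρ]

/-- if `S(u) ∈ Mat_{2n}(𝒜)` satisfies the reflection equation with
shift `ρ` on `ℂ^{2n} ⊗ ℂ^{2n}`, then its upper-right block `B(u)` satisfies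
`R₁₂(u−v) B₁(u) R^t₁₂(−u−v−ρ) B₂(v) = B₂(v) R^t₁₂(−u−v−ρ) B₁(u) R₁₂(u−v)`,
where the `n×n` operator `Q` is of orthogonal type in both cases. -/
theorem block_BB_relation (n : ℕ) (ρ : ℂ) (θ : Fin (2 * n) → ℂ)
    (hcase : (∀ i, θ i = 1) ∨
      (∀ i : Fin (2 * n), θ i = if (i : ℕ) < n then -1 else 1))
    (A : Type*) [Ring A] [Algebra ℂ A]
    (S : ℂ → Matrix (Fin (2 * n)) (Fin (2 * n)) A)
    (D : Set ℂ) (hD : Dᶜ.Finite)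
    (hRE : ∀ u ∈ D, ∀ v ∈ D, u ≠ v → u + v + ρ ≠ 0 →
      yangRA (2 * n) A (u - v) * op1 (S u) * yangRtA (2 * n) θ A (-u - v - ρ) * op2 (S v) =
        op2 (S v) * yangRtA (2 * n) θ A (-u - v - ρ) * op1 (S u)
          * yangRA (2 * n) A (u - v)) :
    ∀ u ∈ D, ∀ v ∈ D, u ≠ v → u + v + ρ ≠ 0 →
      yangRA n A (u - v) * op1 (blockB (S u)) * yangRtA n (orthTheta n) A (-u - v - ρ)
          * op2 (blockB (S v)) =
        op2 (blockB (S v)) * yangRtA n (orthTheta n) A (-u - v - ρ)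
          * op1 (blockB (S u)) * yangRA n A (u - v) :=
  block_BB_relation_general n ρ θ hcase A S D hRE
end
end
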